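/- Receipt implies inclusion: assume (a) every threshold-signed receipt on x implies #c[x] ≥ t; (b) every threshold-signed board B implies #s[B] ≥ t; (c) for honest k ≤ t, k ∈ c[x] ∧ k ∈ s[B] → x ∈ B; (d) t > 2n/3. Then whenever both sig_SSK(x) and sig_SSK(B) exist, x ∈ B. This is property (bb.2): any receipted item appears on the published bulletin board. -/
import Mathlib


theorem stmt13 (n t : ℕ) (ht : 3 * t > 2 * n)
    {ITEM : Type*}
    (RcptSig : ITEM → Prop) (BoardSig : Set ITEM → Prop)
    (c : ITEM → Finset (Fin n)) (s : Set ITEM → Finset (Fin n))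
    (hr : ∀ x, RcptSig x → t ≤ (c x).card)
    (hb : ∀ B, BoardSig B → t ≤ (s B).card)
    (honest : ∀ (k : Fin n) (x : ITEM) (B : Set ITEM),
      k.val < t → k ∈ c x → k ∈ s B → x ∈ B) :
    ∀ (x : ITEM) (B : Set ITEM), RcptSig x → BoardSig B → x ∈ B := by
  intro x B hx hB
  have h1 := hr x hx
  have h2 := hb B hB
  -- intersection is large
  have hunion : (c x ∪ s B).card ≤ n := by
    simpa using Finset.card_le_card (Finset.subset_univ (c x ∪ s B))
  have hsum := Finset.card_union_add_card_inter (c x) (s B)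
  by_contra hxB
  -- all members of the intersection have val ≥ t
  have hbig : ∀ k ∈ c x ∩ s B, t ≤ k.val := by
    intro k hk
    rw [Finset.mem_inter] at hk
    by_contra h
    exact hxB (honest k x B (Nat.lt_of_not_le h) hk.1 hk.2)
  have hinj : (c x ∩ s B).card ≤ (Finset.Ico t n).card := by
    apply Finset.card_le_card_of_injOn (fun k => k.val)
    · intro k hk
      exact Finset.mem_Ico.mpr ⟨hbig k hk, k.isLt⟩
    · intro a _ b _ h
      exact Fin.ext h
  rw [Nat.card_Ico] at hinj
  omega
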